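/- arXiv:math/0607292 — 3 statements merged into one kernel-verified Lean document; each statement's English description precedes it below -/
import Mathlib

section
/- Let G be a finite p-group and F a field of characteristic p. The ideal of FG generated by [FG, FG] together with all central elements of the augmentation ideal Δ(G) equals the kernel of the induced map FG → F[G / (Z(G)·G')], i.e. equals Δ(Z(G)G')·FG. -/
/-!
Put `N = Z(G)G'` and `π : G → G/N`. As `G/N` is abelian, ring commutators vanish in `F[G/N]`.
A central `y ∈ FG` has coefficients constant on conjugacy classes, so `g ↦ y_g (π g - 1)` is
constant on classes and vanishes on `Z(G)`. Every noncentral class of a `p`-group has size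
divisible by `p`, so this function sums to zero: `y` maps to its augmentation in `F[G/N]`.
Conversely, for a two-sided ideal `I`, the map `FG → F[G/N]` factors through `FG/I` as soon as
`n ≡ 1 (mod I)` for `n ∈ N`; for the ideal of the theorem this holds because `z - 1` is central
for `z ∈ Z(G)` and group elements commute modulo ring commutators.
-/

open MonoidAlgebra MulAction
open scoped commutatorElement

theorem IsPGroup.sum_eq_zero_of_smul_invariant {p : ℕ} [Fact p.Prime] {H α M : Type*} [Group H]
    [MulAction H α] [Fintype α] [AddCommMonoid M] (hH : IsPGroup p H)
    (hM : ∀ m : M, p • m = 0) {φ : α → M} (hφ : ∀ (h : H) a, φ (h • a) = φ a)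
    (hfix : ∀ a ∈ fixedPoints H α, φ a = 0) : ∑ a, φ a = 0 := by
  classical
  rw [← (selfEquivSigmaOrbits H α).symm.sum_comp, Fintype.sum_sigma]
  refine Finset.sum_eq_zero fun ω _ => ?_
  have hconst : ∀ b : orbit H ω.out, φ b = φ ω.out := by
    rintro ⟨_, h, rfl⟩
    exact hφ h _
  have hsymm : ∀ b, (selfEquivSigmaOrbits H α).symm ⟨ω, b⟩ = b := fun _ => rfl
  simp only [hsymm, hconst, Finset.sum_const, Finset.card_univ, ← Nat.card_eq_fintype_card]
  obtain ⟨_ | n, hn⟩ := hH.card_orbit ω.out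
  · rw [pow_zero, Nat.card_eq_fintype_card] at hn
    rw [hfix _ (mem_fixedPoints_iff_card_orbit_eq_one.mpr hn), smul_zero]
  · rw [hn, pow_succ, mul_smul, hM, smul_zero]

theorem MonoidHom.commutator_le_ker_of_commute {G M : Type*} [Group G] [Monoid M] (χ : G →* M)
    (h : ∀ a b, Commute (χ a) (χ b)) : commutator G ≤ χ.ker := by
  rw [commutator_eq_closure, Subgroup.closure_le]
  rintro _ ⟨a, b, rfl⟩
  rw [SetLike.mem_coe, mem_ker, commutatorElement_def, map_mul, map_mul, map_mul, (h a b).eq]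
  simp [mul_assoc, ← map_mul]

theorem TwoSidedIdeal.ringCon_mk'_eq_iff {R : Type*} [Ring R] (I : TwoSidedIdeal R) {x y : R} :
    I.ringCon.mk' x = I.ringCon.mk' y ↔ x - y ∈ I :=
  (RingCon.eq _).trans (I.rel_iff x y)

namespace MonoidAlgebra

theorem single_one_mem_center {k G : Type*} [Semiring k] [Group G] {z : G}
    (hz : z ∈ Subgroup.center G) : single z (1 : k) ∈ Set.center (MonoidAlgebra k G) :=
  Semigroup.mem_center_iff.mpr fun w =>
    (single_commute (fun g => (Subgroup.mem_center_iff.mp hz g).symm) Commute.one_left w).eq.symm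

theorem coeff_conj_of_mem_center {k G : Type*} [Semiring k] [Group G]
    {y : MonoidAlgebra k G} (hy : y ∈ Set.center (MonoidAlgebra k G)) (c g : G) :
    y.coeff (c * g * c⁻¹) = y.coeff g := by
  have h := congr_arg (fun z : MonoidAlgebra k G => z.coeff (c * g))
    (Semigroup.mem_center_iff.mp hy (single c 1))
  simpa [coeff_single_mul_apply, coeff_mul_single_apply] using h.symm

theorem mapDomain_eq_algebraMap_lift_of_mem_center {p : ℕ} [Fact p.Prime]
    {k G A : Type*} [CommRing k] [CharP k p] [Group G] [Finite G] [CommGroup A]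
    (hG : IsPGroup p G) (π : G →* A) (hπ : Subgroup.center G ≤ π.ker)
    {y : MonoidAlgebra k G} (hy : y ∈ Set.center (MonoidAlgebra k G)) :
    mapDomain π y = algebraMap k (MonoidAlgebra k A) (lift k k G 1 y) := by
  have := Fintype.ofFinite G
  have hmap : mapDomain π y = ∑ g, single (π g) (y.coeff g) := by
    conv_lhs => rw [← sum_coeff_single y]
    rw [mapDomain_sum, Finsupp.sum_fintype _ _ (by simp)]
    simp only [mapDomain_single]
  have hlift : algebraMap k (MonoidAlgebra k A) (lift k k G 1 y) = ∑ g, single 1 (y.coeff g) := by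
    rw [lift_apply, Finsupp.sum_fintype _ _ (by simp)]
    simp
  rw [hmap, hlift, ← sub_eq_zero, ← Finset.sum_sub_distrib]
  refine (hG.of_equiv ConjAct.toConjAct).sum_eq_zero_of_smul_invariant (fun m => ?_)
    (fun c g => ?_) fun z hz => ?_
  · rw [nsmul_eq_mul, ← map_natCast (algebraMap k _), CharP.cast_eq_zero, map_zero, zero_mul]
  · simp only [ConjAct.smul_def, coeff_conj_of_mem_center hy, map_mul, map_inv,
      mul_inv_cancel_comm]
  · rw [ConjAct.fixedPoints_eq_center] at hz
    rw [MonoidHom.mem_ker.mp (hπ hz), sub_self]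

theorem ker_mapDomainRingHom_mk_le_ker {k G R : Type*} [Semiring k] [Group G] [Semiring R]
    {N : Subgroup G} [N.Normal] (q : MonoidAlgebra k G →+* R)
    (hN : N ≤ ((q : MonoidAlgebra k G →* R).comp (of k G)).ker) :
    RingHom.ker (mapDomainRingHom k (QuotientGroup.mk' N)) ≤ RingHom.ker q := by
  let ψ := liftNCRingHom (q.comp singleOneRingHom) (QuotientGroup.lift N _ hN) fun r g => by
    induction g using QuotientGroup.induction_on with
    | H g => exact (single_commute_single (Commute.one_left g) (Commute.one_right r)).map q
  have hq : q = ψ.comp (mapDomainRingHom k (QuotientGroup.mk' N)) :=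
    ringHom_ext (fun r => by simp [ψ]) fun g => by simp [ψ, ← one_def]
  intro x hx
  rw [RingHom.mem_ker] at hx ⊢
  rw [hq, RingHom.comp_apply, hx, map_zero]

theorem ker_mapDomainRingHom_mk_center_sup_commutator_le {k G : Type*} [Ring k] [Group G]
    {I : TwoSidedIdeal (MonoidAlgebra k G)} (hcomm : ∀ u v, u * v - v * u ∈ I)
    (hZ : ∀ z ∈ Subgroup.center G, single z 1 - 1 ∈ I) :
    ∀ x ∈ RingHom.ker
      (mapDomainRingHom k (QuotientGroup.mk' (Subgroup.center G ⊔ commutator G))), x ∈ I := by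
  intro x hx
  rw [← TwoSidedIdeal.ker_ringCon_mk' I, TwoSidedIdeal.mem_ker]
  refine ker_mapDomainRingHom_mk_le_ker _ (sup_le (fun z hz => ?_)
    (MonoidHom.commutator_le_ker_of_commute _ fun a b => ?_)) hx
  · rw [MonoidHom.mem_ker, MonoidHom.comp_apply, MonoidHom.coe_coe, of_apply,
      ← map_one (RingCon.mk' _), TwoSidedIdeal.ringCon_mk'_eq_iff]
    exact hZ z hz
  · simp only [Commute, SemiconjBy, MonoidHom.comp_apply, MonoidHom.coe_coe, of_apply, ← map_mul,
      TwoSidedIdeal.ringCon_mk'_eq_iff, hcomm]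

end MonoidAlgebra

/-- Let `G` be a finite `p`-group and `F` a field of characteristic `p`.
The two-sided ideal of `FG` generated by the Lie commutators `u*v - v*u`
together with all central elements of the augmentation ideal `Δ(G)` equals
`Δ(Z(G)G')·FG`, the kernel of the induced map `FG → F[G/(Z(G)·G')]`.
Here the augmentation map is `MonoidAlgebra.lift F G F 1`. -/
theorem twoSidedIdeal_span_commutators_central_eq_ker
    (p : ℕ) [Fact p.Prime] (F G : Type*) [Field F] [CharP F p]
    [Group G] [Finite G] (hG : IsPGroup p G) :
    ∀ x : MonoidAlgebra F G,
      x ∈ TwoSidedIdeal.span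
            ({y : MonoidAlgebra F G | ∃ u v : MonoidAlgebra F G, y = u * v - v * u}
              ∪ {y : MonoidAlgebra F G |
                    MonoidAlgebra.lift F F G 1 y = 0 ∧ y ∈ Set.center (MonoidAlgebra F G)})
      ↔ x ∈ RingHom.ker
            (MonoidAlgebra.mapDomainRingHom F
              (QuotientGroup.mk' (Subgroup.center G ⊔ commutator G))) := by
  set N := Subgroup.center G ⊔ commutator G
  have : IsMulCommutative (G ⧸ N) :=
    Subgroup.Normal.quotient_commutative_iff_commutator_le.mpr le_sup_right
  let _ : CommGroup (G ⧸ N) := { mul_comm := this.is_comm.comm }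
  refine fun x => ⟨fun hx => ?_, fun hx => ?_⟩
  · refine (TwoSidedIdeal.mem_ker _).mp (TwoSidedIdeal.span_le.mpr ?_ hx)
    rintro _ (⟨u, v, rfl⟩ | ⟨hy0, hy⟩) <;> rw [SetLike.mem_coe, TwoSidedIdeal.mem_ker]
    · rw [map_sub, map_mul, map_mul, mul_comm, sub_self]
    · have hZ : Subgroup.center G ≤ (QuotientGroup.mk' N).ker :=
        le_sup_left.trans (QuotientGroup.ker_mk' N).ge
      rw [mapDomainRingHom_apply, mapDomain_eq_algebraMap_lift_of_mem_center hG _ hZ hy, hy0,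
        map_zero]
  · refine ker_mapDomainRingHom_mk_center_sup_commutator_le
      (fun u v => TwoSidedIdeal.subset_span (Or.inl ⟨u, v, rfl⟩))
      (fun z hz => TwoSidedIdeal.subset_span (Or.inr ⟨by simp, ?_⟩)) x hx
    simpa only [sub_eq_add_neg] using
      Set.add_mem_center (single_one_mem_center hz) (Set.neg_mem_center Set.one_mem_center)
end

section
/- Let G be a finite p-group with nontrivial cyclic commutator subgroup G' and nilpotency class c > 1. Let N = Z(G) ∩ G'. Then N is nontrivial and cl(G/N) = c − 1. -/
/-- The nilpotency class of a group, as the least `n` with `γ_{n+1}(G) = 1`,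
i.e. the least length of the lower central series. -/
noncomputable def nilClass (G : Type*) [Group G] : ℕ :=
  sInf {n : ℕ | (⊤ : Subgroup G).lowerCentralSeries n = ⊥}

/-! With `γ_1(G) = G` (Mathlib's `lowerCentralSeries ⊤ n` is `γ_{n+1}(G)`), class `c` means
`γ_{c+1}(G) = 1 ≠ γ_c(G)`. So `γ_c(G)` is central, and for `c ≥ 2` it lies in `γ_2(G) = G'`;
hence `N = Z(G) ∩ G'` is nontrivial. Modulo any central `N ⊇ γ_c(G)` the class drops by exactly
one: `γ_c(G/N) = 1`, while `γ_{c-1}(G) ≤ N ≤ Z(G)` would force `γ_c(G) = 1`. -/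

theorem nilClass_eq_nilpotencyClass (G : Type*) [Group G] [Group.IsNilpotent G] :
    nilClass G = Group.nilpotencyClass G := by
  have hset : {n : ℕ | (⊤ : Subgroup G).lowerCentralSeries n = ⊥} =
      Set.Ici (Group.nilpotencyClass G) :=
    Set.ext fun _ => Subgroup.lowerCentralSeries_eq_bot_iff_nilpotencyClass_le
  rw [nilClass, hset, csInf_Ici]

namespace Subgroup

variable {G : Type*} [Group G]

theorem top_lowerCentralSeries_quotient_eq_bot_iff (N : Subgroup G) [N.Normal] (n : ℕ) :
    (⊤ : Subgroup (G ⧸ N)).lowerCentralSeries n = ⊥ ↔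
      (⊤ : Subgroup G).lowerCentralSeries n ≤ N := by
  rw [← map_top_of_surjective _ (QuotientGroup.mk'_surjective N), ← map_lowerCentralSeries,
    map_eq_bot_iff, QuotientGroup.ker_mk']

theorem top_lowerCentralSeries_le_center_inf_commutator {n : ℕ} (hn : 1 ≤ n)
    (h : (⊤ : Subgroup G).lowerCentralSeries (n + 1) = ⊥) :
    (⊤ : Subgroup G).lowerCentralSeries n ≤ center G ⊓ _root_.commutator G :=
  le_inf (commutator_top_right_eq_bot_iff_le_center.mp h)
    (top_lowerCentralSeries_one (G := G) ▸ lowerCentralSeries_antitone _ hn)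

end Subgroup

namespace Group

theorem nilpotencyClass_quotient_of_le_center {G : Type*} [Group G] [IsNilpotent G]
    {N : Subgroup G} [N.Normal] (hNZ : N ≤ Subgroup.center G)
    (hN : (⊤ : Subgroup G).lowerCentralSeries (nilpotencyClass G - 1) ≤ N) :
    nilpotencyClass (G ⧸ N) = nilpotencyClass G - 1 := by
  refine eq_of_forall_ge_iff fun n => ?_
  rw [← Subgroup.lowerCentralSeries_eq_bot_iff_nilpotencyClass_le,
    Subgroup.top_lowerCentralSeries_quotient_eq_bot_iff, tsub_le_iff_right,
    ← Subgroup.lowerCentralSeries_eq_bot_iff_nilpotencyClass_le]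
  constructor
  · exact fun h => Subgroup.lowerCentralSeries_succ_eq_bot _ (h.trans hNZ)
  · intro h
    have hc : nilpotencyClass G - 1 ≤ n :=
      tsub_le_iff_right.mpr (Subgroup.lowerCentralSeries_eq_bot_iff_nilpotencyClass_le.mp h)
    exact (Subgroup.lowerCentralSeries_antitone _ hc).trans hN

end Group

theorem nilClass_quotient_center_inter_commutator_general
    (p : ℕ) [Fact p.Prime] (G : Type*) [Group G] [Finite G] (hG : IsPGroup p G)
    (c : ℕ) (hc : nilClass G = c) (hc1 : 1 < c) :
    Subgroup.center G ⊓ commutator G ≠ ⊥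
    ∧ nilClass (G ⧸ (Subgroup.center G ⊓ commutator G)) = c - 1 := by
  have := hG.isNilpotent
  rw [nilClass_eq_nilpotencyClass] at hc
  have hbot (n : ℕ) : (⊤ : Subgroup G).lowerCentralSeries n = ⊥ ↔ c ≤ n :=
    hc ▸ Subgroup.lowerCentralSeries_eq_bot_iff_nilpotencyClass_le
  have hne_bot : (⊤ : Subgroup G).lowerCentralSeries (c - 1) ≠ ⊥ := by
    rw [Ne, hbot]
    omega
  have hle : (⊤ : Subgroup G).lowerCentralSeries (c - 1) ≤ Subgroup.center G ⊓ commutator G :=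
    Subgroup.top_lowerCentralSeries_le_center_inf_commutator (by omega) ((hbot _).mpr (by omega))
  refine ⟨ne_bot_of_le_ne_bot hne_bot hle, ?_⟩
  rw [nilClass_eq_nilpotencyClass,
    Group.nilpotencyClass_quotient_of_le_center inf_le_left (hc ▸ hle), hc]

/-- Let `G` be a finite `p`-group with nontrivial cyclic commutator subgroup
and nilpotency class `c > 1`. Then `N = Z(G) ∩ G'` is nontrivial and
`cl(G/N) = c - 1`. -/
theorem nilClass_quotient_center_inter_commutator
    (p : ℕ) [Fact p.Prime] (G : Type*) [Group G] [Finite G] (hG : IsPGroup p G)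
    (hcyc : ∃ g : G, commutator G = Subgroup.zpowers g)
    (hne : commutator G ≠ ⊥)
    (c : ℕ) (hc : nilClass G = c) (hc1 : 1 < c) :
    Subgroup.center G ⊓ commutator G ≠ ⊥
    ∧ nilClass (G ⧸ (Subgroup.center G ⊓ commutator G)) = c - 1 :=
  nilClass_quotient_center_inter_commutator_general p G hG c hc hc1
end

section
/- Let m ≥ 4 and let G = ⟨a, b | a^{2^{m-2}} = 1, b^4 = 1, b^{-1}ab = a^{1+2^{m-3}}⟩ (the group G_1). Then G has order 2^m, its commutator subgroup is ⟨a^{2^{m-3}}⟩ of order 2, its center is ⟨a^2, b^2⟩ ≅ C_{2^{m-3}} × C_2, and its nilpotency class is 2. -/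
/-- Relators of `G₁ = ⟨a, b ∣ a^{2^{m-2}} = 1, b⁴ = 1, b⁻¹ab = a^{1+2^{m-3}}⟩`. -/
def G1rels (m : ℕ) : Set (FreeGroup (Fin 2)) :=
  { FreeGroup.of 0 ^ (2 ^ (m - 2)),
    FreeGroup.of 1 ^ 4,
    (FreeGroup.of 1)⁻¹ * FreeGroup.of 0 * FreeGroup.of 1
      * FreeGroup.of 0 ^ (-(1 + 2 ^ (m - 3) : ℤ)) }

open scoped commutatorElement

section ZModPowHom

variable {G : Type*} [Group G] {n : ℕ}

lemma Multiplicative.exists_eq_ofAdd_intCast (x : Multiplicative (ZMod n)) :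
    ∃ z : ℤ, x = .ofAdd (z : ZMod n) :=
  (ZMod.intCast_surjective x.toAdd).imp fun _ hz => hz.symm

def zmodPowHom (g : G) (hg : g ^ n = 1) : Multiplicative (ZMod n) →* G :=
  AddMonoidHom.toMultiplicativeLeft <| ZMod.lift n
    ⟨zmultiplesHom (Additive G) (.ofMul g), by simp [← ofMul_pow, hg]⟩

@[simp]
lemma zmodPowHom_ofAdd_intCast (g : G) (hg : g ^ n = 1) (z : ℤ) :
    zmodPowHom g hg (.ofAdd (z : ZMod n)) = g ^ z := by
  simp [zmodPowHom, ZMod.lift_coe]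

@[simp]
lemma zmodPowHom_ofAdd_one (g : G) (hg : g ^ n = 1) : zmodPowHom g hg (.ofAdd 1) = g := by
  simpa using zmodPowHom_ofAdd_intCast g hg 1

lemma zmodPowHom_range (g : G) (hg : g ^ n = 1) :
    (zmodPowHom g hg).range = Subgroup.zpowers g := by
  ext x
  constructor
  · rintro ⟨y, rfl⟩
    obtain ⟨z, rfl⟩ := Multiplicative.exists_eq_ofAdd_intCast y
    exact ⟨z, (zmodPowHom_ofAdd_intCast g hg z).symm⟩
  · rintro ⟨z, rfl⟩
    exact ⟨.ofAdd z, zmodPowHom_ofAdd_intCast g hg z⟩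

lemma Multiplicative.zmod_hom_ext {M : Type*} [Group M] {f g : Multiplicative (ZMod n) →* M}
    (h : f (.ofAdd 1) = g (.ofAdd 1)) : f = g := by
  refine MonoidHom.ext fun x => ?_
  obtain ⟨z, rfl⟩ := Multiplicative.exists_eq_ofAdd_intCast x
  rw [show Multiplicative.ofAdd (z : ZMod n) = .ofAdd 1 ^ z by simp [← ofAdd_zsmul],
    map_zpow, map_zpow, h]

section Pair

variable {m : ℕ} {g h : G} (hg : g ^ n = 1) (hh : h ^ m = 1) (hgh : Commute g h)

def zmodProdHom : Multiplicative (ZMod n) × Multiplicative (ZMod m) →* G :=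
  (zmodPowHom g hg).noncommCoprod (zmodPowHom h hh) fun x y => by
    obtain ⟨z, rfl⟩ := Multiplicative.exists_eq_ofAdd_intCast x
    obtain ⟨w, rfl⟩ := Multiplicative.exists_eq_ofAdd_intCast y
    simpa using hgh.zpow_zpow z w

lemma zmodProdHom_ofAdd_intCast (z w : ℤ) :
    zmodProdHom hg hh hgh (.ofAdd (z : ZMod n), .ofAdd (w : ZMod m)) = g ^ z * h ^ w := by
  simp [zmodProdHom]

lemma zmodProdHom_range : (zmodProdHom hg hh hgh).range = Subgroup.closure {g, h} := by
  rw [zmodProdHom, MonoidHom.noncommCoprod_range, zmodPowHom_range, zmodPowHom_range,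
    Subgroup.zpowers_eq_closure, Subgroup.zpowers_eq_closure, ← Subgroup.closure_union,
    Set.singleton_union]

end Pair

end ZModPowHom

lemma Units.val_sub_one_dvd_val_zpow_sub_one {R : Type*} [CommRing R] (u : Rˣ) (z : ℤ) :
    (u - 1 : R) ∣ ↑(u ^ z) - 1 := by
  obtain ⟨k, rfl | rfl⟩ := z.eq_nat_or_neg
  · simpa using sub_one_dvd_pow_sub_one (u : R) k
  · have h : ↑(u ^ (-k : ℤ)) - 1 = -(↑(u ^ (-k : ℤ)) * ((u : R) ^ k - 1)) := by
      rw [mul_sub, ← Units.val_pow_eq_pow_val, ← Units.val_mul, ← zpow_natCast, ← zpow_add,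
        neg_add_cancel, zpow_zero, Units.val_one, mul_one, neg_sub]
    rw [h]
    exact (dvd_mul_of_dvd_right (sub_one_dvd_pow_sub_one _ k) _).neg_right

lemma ZMod.intCast_mul_eq_zero_iff {n m d : ℕ} (hn : n = m * d) (hd : d ≠ 0) (z : ℤ) :
    ((z * d : ℤ) : ZMod n) = 0 ↔ (z : ZMod m) = 0 := by
  subst hn
  rw [ZMod.intCast_zmod_eq_zero_iff_dvd, ZMod.intCast_zmod_eq_zero_iff_dvd, Nat.cast_mul,
    mul_dvd_mul_iff_right (by exact_mod_cast hd)]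

section Transport

variable {G H : Type*} [Group G] [Group H] (e : G ≃* H)

lemma Subgroup.map_mulEquiv_commutator :
    (_root_.commutator G).map e.toMonoidHom = _root_.commutator H := by
  rw [_root_.commutator_def, _root_.commutator_def, Subgroup.map_commutator,
    Subgroup.map_top_of_surjective _ e.surjective]

lemma Subgroup.map_mulEquiv_center :
    (Subgroup.center G).map e.toMonoidHom = Subgroup.center H := by
  rw [Subgroup.map_equiv_eq_comap_symm']
  exact Subgroup.ext fun _ => MulEquivClass.apply_mem_center_iff e.symm

end Transport

lemma nilClass_eq_two {G : Type*} [Group G] (hne : commutator G ≠ ⊥)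
    (hle : commutator G ≤ Subgroup.center G) : nilClass G = 2 := by
  have h2 : (⊤ : Subgroup G).lowerCentralSeries 2 = ⊥ := by
    rw [Subgroup.lowerCentralSeries_succ, Subgroup.top_lowerCentralSeries_one,
      Subgroup.commutator_eq_bot_iff_le_centralizer, Subgroup.coe_top, Subgroup.centralizer_univ]
    exact hle
  refine le_antisymm (Nat.sInf_le h2) (le_csInf ⟨2, h2⟩ fun k hk => ?_)
  by_contra! hk2
  interval_cases k
  · exact hne (eq_bot_iff.mpr (hk ▸ le_top))
  · exact hne hk

/-- `G1rels m` is literally `metacyclicRels (2 ^ (m - 2)) 4 (1 + 2 ^ (m - 3))`. -/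
def metacyclicRels (n r : ℕ) (T : ℤ) : Set (FreeGroup (Fin 2)) :=
  { FreeGroup.of 0 ^ n,
    FreeGroup.of 1 ^ r,
    (FreeGroup.of 1)⁻¹ * FreeGroup.of 0 * FreeGroup.of 1 * FreeGroup.of 0 ^ (-T) }

namespace metacyclicRels

variable {n r : ℕ} {T : ℤ}

lemma of_zero_pow : (PresentedGroup.of 0 : PresentedGroup (metacyclicRels n r T)) ^ n = 1 :=
  PresentedGroup.one_of_mem (Or.inl rfl)

lemma of_one_pow : (PresentedGroup.of 1 : PresentedGroup (metacyclicRels n r T)) ^ r = 1 :=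
  PresentedGroup.one_of_mem (Or.inr (Or.inl rfl))

lemma of_one_inv_mul_of_zero_mul_of_one :
    (PresentedGroup.of 1 : PresentedGroup (metacyclicRels n r T))⁻¹ * .of 0 * .of 1 =
      .of 0 ^ T := by
  have h := PresentedGroup.one_of_mem (rels := metacyclicRels n r T) (Or.inr (Or.inr rfl))
  rw [map_mul, map_zpow, zpow_neg, mul_inv_eq_one] at h
  exact h

end metacyclicRels

section

variable (n r : ℕ) (u : (ZMod n)ˣ) (hu : u ^ r = 1)

def metacyclicAction : Multiplicative (ZMod r) →* MulAut (Multiplicative (ZMod n)) :=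
  (MulAutMultiplicative (ZMod n)).symm.toMonoidHom.comp
    ((DistribMulAction.toAddAut (ZMod n)ˣ (ZMod n)).comp (zmodPowHom u hu))

/-- `C_n ⋊ C_r` with `b a b⁻¹ = a^u`; it satisfies the relations of `metacyclicRels n r T`
exactly when `T ≡ u⁻¹ (mod n)`. -/
abbrev SplitMetacyclic :=
  Multiplicative (ZMod n) ⋊[metacyclicAction n r u hu] Multiplicative (ZMod r)

variable {n r u hu}

@[simp]
lemma metacyclicAction_apply (h : Multiplicative (ZMod r)) (x : Multiplicative (ZMod n)) :
    metacyclicAction n r u hu h x = .ofAdd (zmodPowHom u hu h * x.toAdd) := rfl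

end

namespace SplitMetacyclic

variable {n r : ℕ} {u : (ZMod n)ˣ} {hu : u ^ r = 1}

def a : SplitMetacyclic n r u hu := SemidirectProduct.inl (.ofAdd 1)
def b : SplitMetacyclic n r u hu := SemidirectProduct.inr (.ofAdd 1)

lemma a_zpow (z : ℤ) : (a : SplitMetacyclic n r u hu) ^ z = SemidirectProduct.inl (.ofAdd z) := by
  rw [a, ← map_zpow, ← ofAdd_zsmul, zsmul_one]

lemma a_pow (k : ℕ) : (a : SplitMetacyclic n r u hu) ^ k = SemidirectProduct.inl (.ofAdd k) := by
  simpa using a_zpow (k : ℤ)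

lemma b_zpow (z : ℤ) : (b : SplitMetacyclic n r u hu) ^ z = SemidirectProduct.inr (.ofAdd z) := by
  rw [b, ← map_zpow, ← ofAdd_zsmul, zsmul_one]

lemma b_pow (k : ℕ) : (b : SplitMetacyclic n r u hu) ^ k = SemidirectProduct.inr (.ofAdd k) := by
  rw [b, ← map_pow, ← ofAdd_nsmul, nsmul_one]

lemma a_pow_card : (a : SplitMetacyclic n r u hu) ^ n = 1 := by
  simp [a_pow]

lemma b_pow_card : (b : SplitMetacyclic n r u hu) ^ r = 1 := by
  simp [b_pow]

lemma b_inv_mul_a_mul_b {T : ℤ} (hT : (T : ZMod n) = ↑u⁻¹) :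
    (b : SplitMetacyclic n r u hu)⁻¹ * a * b = a ^ T := by
  rw [a_zpow, hT, b, ← map_inv, a, ← SemidirectProduct.inl_aut_inv, ← map_inv,
    metacyclicAction_apply, map_inv, zmodPowHom_ofAdd_one]
  simp

variable {G : Type*} [Group G] {x y : G} {T : ℤ}

lemma zpow_mul_zmodPowHom_mul_zpow_inv (hT : (T : ZMod n) = ↑u⁻¹) (hx : x ^ n = 1)
    (hxy : y⁻¹ * x * y = x ^ T) (z : ℤ) (c : ZMod n) :
    y ^ z * zmodPowHom x hx (.ofAdd c) * (y ^ z)⁻¹ =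
      zmodPowHom x hx (.ofAdd (↑(u ^ z) * c)) := by
  set X : ZMod n → G := fun c => zmodPowHom x hx (.ofAdd c)
  have hback (c : ZMod n) : y⁻¹ * X c * y = X (↑u⁻¹ * c) := by
    obtain ⟨w, rfl⟩ := ZMod.intCast_surjective c
    simp only [X, ← hT, ← Int.cast_mul, zmodPowHom_ofAdd_intCast, zpow_mul, ← hxy]
    simpa using (conj_zpow (a := y⁻¹) (b := x)).symm
  have hfwd (c : ZMod n) : y * X c * y⁻¹ = X (↑u * c) := by
    have h := hback (↑u * c)
    rw [← mul_assoc, Units.inv_mul, one_mul] at h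
    rw [← h]
    group
  induction z using Int.induction_on generalizing c with
  | zero => simp
  | succ z ih =>
    calc y ^ (z + 1 : ℤ) * X c * (y ^ (z + 1 : ℤ))⁻¹
        = y * (y ^ (z : ℤ) * X c * (y ^ (z : ℤ))⁻¹) * y⁻¹ := by group
      _ = X (↑(u ^ (z + 1 : ℤ)) * c) := by
        rw [ih, hfwd, zpow_add_one, mul_comm (u ^ (z : ℤ)), Units.val_mul, mul_assoc]
  | pred z ih =>
    calc y ^ (-z - 1 : ℤ) * X c * (y ^ (-z - 1 : ℤ))⁻¹
        = y⁻¹ * (y ^ (-z : ℤ) * X c * (y ^ (-z : ℤ))⁻¹) * y := by group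
      _ = X (↑(u ^ (-z - 1 : ℤ)) * c) := by
        rw [ih, hback, zpow_sub_one, mul_comm (u ^ (-z : ℤ)), Units.val_mul, mul_assoc]

def lift (hT : (T : ZMod n) = ↑u⁻¹) (hx : x ^ n = 1) (hy : y ^ r = 1)
    (hxy : y⁻¹ * x * y = x ^ T) : SplitMetacyclic n r u hu →* G :=
  SemidirectProduct.lift (zmodPowHom x hx) (zmodPowHom y hy) fun h => by
    obtain ⟨z, rfl⟩ := Multiplicative.exists_eq_ofAdd_intCast h
    refine Multiplicative.zmod_hom_ext ?_
    have h := zpow_mul_zmodPowHom_mul_zpow_inv hT hx hxy z 1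
    simp only [MonoidHom.comp_apply, MulEquiv.coe_toMonoidHom, metacyclicAction_apply,
      zmodPowHom_ofAdd_intCast, zmodPowHom_ofAdd_one, MulAut.conj_apply, toAdd_ofAdd,
      mul_one] at h ⊢
    exact h.symm

@[simp]
lemma lift_a (hT : (T : ZMod n) = ↑u⁻¹) (hx : x ^ n = 1) (hy : y ^ r = 1)
    (hxy : y⁻¹ * x * y = x ^ T) : lift (hu := hu) hT hx hy hxy a = x := by
  simp [lift, a]

@[simp]
lemma lift_b (hT : (T : ZMod n) = ↑u⁻¹) (hx : x ^ n = 1) (hy : y ^ r = 1)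
    (hxy : y⁻¹ * x * y = x ^ T) : lift (hu := hu) hT hx hy hxy b = y := by
  simp [lift, b]

lemma freeGroup_lift_metacyclicRels_eq_one (hT : (T : ZMod n) = ↑u⁻¹) :
    ∀ ρ ∈ metacyclicRels n r T,
      FreeGroup.lift ![(a : SplitMetacyclic n r u hu), b] ρ = 1 := by
  rintro ρ (rfl | rfl | rfl)
  · simpa using a_pow_card
  · simpa using b_pow_card
  · simp [b_inv_mul_a_mul_b hT]

def presentationEquiv (hT : (T : ZMod n) = ↑u⁻¹) :
    PresentedGroup (metacyclicRels n r T) ≃* SplitMetacyclic n r u hu :=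
  MonoidHom.toMulEquiv (PresentedGroup.toGroup (freeGroup_lift_metacyclicRels_eq_one hT))
    (lift hT metacyclicRels.of_zero_pow metacyclicRels.of_one_pow
      metacyclicRels.of_one_inv_mul_of_zero_mul_of_one)
    (PresentedGroup.ext fun i => by fin_cases i <;> simp [PresentedGroup.toGroup.of])
    (SemidirectProduct.hom_ext (Multiplicative.zmod_hom_ext (by simp [lift, a]))
      (Multiplicative.zmod_hom_ext (by simp [lift, b])))

lemma presentationEquiv_of_zero (hT : (T : ZMod n) = ↑u⁻¹) :
    presentationEquiv (hu := hu) hT (.of 0) = a :=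
  PresentedGroup.toGroup.of (freeGroup_lift_metacyclicRels_eq_one hT)

lemma presentationEquiv_of_one (hT : (T : ZMod n) = ↑u⁻¹) :
    presentationEquiv (hu := hu) hT (.of 1) = b :=
  PresentedGroup.toGroup.of (freeGroup_lift_metacyclicRels_eq_one hT)

lemma commutatorElement_eq (g h : SplitMetacyclic n r u hu) :
    ⁅g, h⁆ = SemidirectProduct.inl (.ofAdd ((1 - zmodPowHom u hu h.right) * g.left.toAdd
      - (1 - zmodPowHom u hu g.right) * h.left.toAdd)) := by
  refine SemidirectProduct.ext ?_ ?_
  · apply Multiplicative.toAdd.injective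
    simp only [commutatorElement_def, SemidirectProduct.mul_left, SemidirectProduct.inv_left,
      SemidirectProduct.mul_right, SemidirectProduct.inv_right, SemidirectProduct.left_inl,
      metacyclicAction_apply, toAdd_mul, toAdd_ofAdd, toAdd_inv]
    simp only [map_mul, map_inv, Units.val_mul]
    generalize zmodPowHom u hu g.right = p, zmodPowHom u hu h.right = q
    linear_combination (-(↑q * g.left.toAdd) - h.left.toAdd) * Units.mul_inv p
      - (h.left.toAdd * ↑p * ↑p⁻¹) * Units.mul_inv q
  · simp only [commutatorElement_def, SemidirectProduct.mul_right, SemidirectProduct.inv_right,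
      SemidirectProduct.right_inl]
    rw [mul_comm g.right]
    group

lemma val_sub_one_dvd_zmodPowHom_sub_one (h : Multiplicative (ZMod r)) :
    (u - 1 : ZMod n) ∣ ↑(zmodPowHom u hu h) - 1 := by
  obtain ⟨z, rfl⟩ := Multiplicative.exists_eq_ofAdd_intCast h
  simpa using Units.val_sub_one_dvd_val_zpow_sub_one u z

lemma inl_ofAdd_mul_mem_zpowers (x c : ZMod n) :
    (SemidirectProduct.inl (.ofAdd (x * c)) : SplitMetacyclic n r u hu) ∈
      Subgroup.zpowers (SemidirectProduct.inl (.ofAdd x)) := by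
  obtain ⟨z, rfl⟩ := ZMod.intCast_surjective c
  exact ⟨z, by dsimp only; rw [← map_zpow, ← ofAdd_zsmul, zsmul_eq_mul, mul_comm]⟩

lemma commutator_eq_zpowers : commutator (SplitMetacyclic n r u hu) =
    Subgroup.zpowers (SemidirectProduct.inl (.ofAdd ((u : ZMod n) - 1))) := by
  refine le_antisymm ?_ ?_
  · rw [commutator_def, Subgroup.commutator_le]
    intro g _ h _
    obtain ⟨c, hc⟩ : ((u : ZMod n) - 1) ∣ (1 - zmodPowHom u hu h.right) * g.left.toAdd
        - (1 - zmodPowHom u hu g.right) * h.left.toAdd :=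
      dvd_sub (dvd_mul_of_dvd_left (dvd_sub_comm.mp (val_sub_one_dvd_zmodPowHom_sub_one _)) _)
        (dvd_mul_of_dvd_left (dvd_sub_comm.mp (val_sub_one_dvd_zmodPowHom_sub_one _)) _)
    rw [commutatorElement_eq, hc]
    exact inl_ofAdd_mul_mem_zpowers _ _
  · rw [Subgroup.zpowers_le]
    have h : ⁅(b : SplitMetacyclic n r u hu), (a : SplitMetacyclic n r u hu)⁆ =
        SemidirectProduct.inl (.ofAdd ((u : ZMod n) - 1)) := by
      simp [commutatorElement_eq, a, b]
    exact h ▸ Subgroup.commutator_mem_commutator (Subgroup.mem_top _) (Subgroup.mem_top _)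

lemma mem_center_iff (w : SplitMetacyclic n r u hu) : w ∈ Subgroup.center _ ↔
    zmodPowHom u hu w.right = 1 ∧ ((u : ZMod n) - 1) * w.left.toAdd = 0 := by
  have hcomm (g : SplitMetacyclic n r u hu) : g * w = w * g ↔
      (1 - zmodPowHom u hu w.right) * g.left.toAdd
        - (1 - zmodPowHom u hu g.right) * w.left.toAdd = 0 := by
    rw [← commutatorElement_eq_one_iff_mul_comm, commutatorElement_eq, map_eq_one_iff _
      SemidirectProduct.inl_injective, ofAdd_eq_one]
  simp only [Subgroup.mem_center_iff, hcomm]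
  constructor
  · intro h
    have ha := h a
    have hb := h b
    simp only [a, b, SemidirectProduct.left_inl, SemidirectProduct.right_inl,
      SemidirectProduct.left_inr, SemidirectProduct.right_inr, toAdd_ofAdd, toAdd_one, map_one,
      Units.val_one, zmodPowHom_ofAdd_one, sub_self, zero_mul, mul_zero, mul_one, sub_zero,
      zero_sub, neg_eq_zero] at ha hb
    exact ⟨Units.ext (sub_eq_zero.mp ha).symm, by linear_combination -hb⟩
  · rintro ⟨hU, hx⟩ g
    obtain ⟨c, hc⟩ := val_sub_one_dvd_zmodPowHom_sub_one (hu := hu) g.right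
    rw [hU, Units.val_one, sub_self, zero_mul, zero_sub, neg_eq_zero, ← neg_sub, hc]
    linear_combination -c * hx

end SplitMetacyclic

-- Indexed by `k = m - 4`, so that `2 ^ (m - 2) = 2 ^ (k + 2)` and `2 ^ (m - 3) = 2 ^ (k + 1)`
-- hold definitionally.
namespace G1

variable (k : ℕ)

lemma two_pow_mul_intCast_eq_zero_iff (c : ℤ) :
    (2 ^ (k + 1) * c : ZMod (2 ^ (k + 2))) = 0 ↔ 2 ∣ c := by
  have h := ZMod.intCast_mul_eq_zero_iff (n := 2 ^ (k + 2)) (m := 2) (d := 2 ^ (k + 1))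
    (by ring) (by positivity) c
  push_cast at h
  rw [mul_comm, h, ZMod.intCast_zmod_eq_zero_iff_dvd]
  norm_cast

lemma two_pow_ne_zero : (2 ^ (k + 1) : ZMod (2 ^ (k + 2))) ≠ 0 := by
  simpa using (two_pow_mul_intCast_eq_zero_iff k 1).not.mpr (by norm_num)

lemma two_mul_two_pow : (2 * 2 ^ (k + 1) : ZMod (2 ^ (k + 2))) = 0 := by
  rw [← pow_succ']
  exact_mod_cast ZMod.natCast_self _

lemma one_add_two_pow_mul_self :
    (1 + 2 ^ (k + 1) : ZMod (2 ^ (k + 2))) * (1 + 2 ^ (k + 1)) = 1 := by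
  linear_combination (1 + 2 ^ k : ZMod (2 ^ (k + 2))) * two_mul_two_pow k

def u : (ZMod (2 ^ (k + 2)))ˣ where
  val := 1 + 2 ^ (k + 1)
  inv := 1 + 2 ^ (k + 1)
  val_inv := one_add_two_pow_mul_self k
  inv_val := one_add_two_pow_mul_self k

lemma u_sq : u k ^ 2 = 1 :=
  Units.ext (by rw [sq, Units.val_mul, Units.val_one]; exact one_add_two_pow_mul_self k)

lemma u_pow_four : u k ^ 4 = 1 := by
  rw [show 4 = 2 * 2 from rfl, pow_mul, u_sq, one_pow]

lemma u_zpow_eq_one_iff (c : ℤ) : u k ^ c = 1 ↔ 2 ∣ c := by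
  have hu1 : u k ≠ 1 := fun h => two_pow_ne_zero k (by simpa [u] using congrArg Units.val h)
  rw [← orderOf_dvd_iff_zpow_eq_one, orderOf_eq_prime (u_sq k) hu1]
  norm_cast

abbrev Model := SplitMetacyclic (2 ^ (k + 2)) 4 (u k) (u_pow_four k)

def equivModel : PresentedGroup (G1rels (k + 4)) ≃* Model k :=
  SplitMetacyclic.presentationEquiv (T := 1 + 2 ^ (k + 1)) (by push_cast; rfl)

open SplitMetacyclic

lemma card_model : Nat.card (Model k) = 2 ^ (k + 4) := by
  rw [SemidirectProduct.card, Nat.card_congr Multiplicative.toAdd,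
    Nat.card_congr Multiplicative.toAdd, Nat.card_zmod, Nat.card_zmod]
  ring

lemma u_val_sub_one : ((u k : ZMod (2 ^ (k + 2))) - 1) = 2 ^ (k + 1) := by
  simp [u]

lemma commutator_model : commutator (Model k) = Subgroup.zpowers (a ^ 2 ^ (k + 1)) := by
  rw [commutator_eq_zpowers, a_pow, u_val_sub_one]
  push_cast
  rfl

lemma orderOf_a_pow : orderOf ((a : Model k) ^ 2 ^ (k + 1)) = 2 := by
  rw [a_pow, orderOf_injective _ SemidirectProduct.inl_injective, orderOf_ofAdd_eq_addOrderOf]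
  push_cast
  exact addOrderOf_eq_prime (by simpa using two_mul_two_pow k) (two_pow_ne_zero k)

lemma center_model : Subgroup.center (Model k) = Subgroup.closure {a ^ 2, b ^ 2} := by
  refine le_antisymm (fun w hw => ?_) ((Subgroup.closure_le _).mpr ?_)
  · obtain ⟨x, hx⟩ := Multiplicative.exists_eq_ofAdd_intCast w.left
    obtain ⟨y, hy⟩ := Multiplicative.exists_eq_ofAdd_intCast w.right
    rw [mem_center_iff, hy, zmodPowHom_ofAdd_intCast, u_zpow_eq_one_iff, hx, toAdd_ofAdd,
      u_val_sub_one, two_pow_mul_intCast_eq_zero_iff] at hw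
    obtain ⟨⟨y, rfl⟩, ⟨x, rfl⟩⟩ := hw
    have hw : w = (a ^ 2) ^ x * (b ^ 2) ^ y := by
      rw [← zpow_natCast, ← zpow_natCast, ← zpow_mul, ← zpow_mul, a_zpow, b_zpow,
        ← SemidirectProduct.mk_eq_inl_mul_inr]
      exact SemidirectProduct.ext hx hy
    rw [hw]
    exact mul_mem (zpow_mem (Subgroup.subset_closure (by simp)) _)
      (zpow_mem (Subgroup.subset_closure (by simp)) _)
  · rintro _ (rfl | rfl) <;> rw [SetLike.mem_coe, mem_center_iff]
    · simp [a_pow, u_val_sub_one, mul_comm _ (2 : ZMod _), two_mul_two_pow]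
    · simpa [b_pow, u_sq] using zmodPowHom_ofAdd_intCast (u k) (u_pow_four k) 2

lemma a_sq_pow : ((a : Model k) ^ 2) ^ 2 ^ (k + 1) = 1 := by
  rw [← pow_mul, ← pow_succ', a_pow_card]

lemma b_sq_pow : ((b : Model k) ^ 2) ^ 2 = 1 := by
  rw [← pow_mul]
  exact b_pow_card

lemma commute_a_sq_b_sq : Commute ((a : Model k) ^ 2) (b ^ 2) :=
  Subgroup.mem_center_iff.mp (center_model k ▸ Subgroup.subset_closure (by simp)) _

noncomputable def centerParam :
    Multiplicative (ZMod (2 ^ (k + 1))) × Multiplicative (ZMod 2) →* Model k :=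
  zmodProdHom (a_sq_pow k) (b_sq_pow k) (commute_a_sq_b_sq k)

lemma centerParam_injective : Function.Injective (centerParam k) := by
  rw [injective_iff_map_eq_one]
  rintro ⟨x, y⟩ h
  obtain ⟨z, rfl⟩ := Multiplicative.exists_eq_ofAdd_intCast x
  obtain ⟨w, rfl⟩ := Multiplicative.exists_eq_ofAdd_intCast y
  rw [centerParam, zmodProdHom_ofAdd_intCast, ← zpow_natCast, ← zpow_natCast, ← zpow_mul,
    ← zpow_mul, a_zpow, b_zpow, ← SemidirectProduct.mk_eq_inl_mul_inr] at h
  have hz := congrArg (fun v => v.left.toAdd) h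
  have hw := congrArg (fun v => v.right.toAdd) h
  simp only [toAdd_ofAdd, SemidirectProduct.one_left, SemidirectProduct.one_right,
    toAdd_one] at hz hw
  rw [mul_comm, ZMod.intCast_mul_eq_zero_iff (pow_succ 2 (k + 1)) two_ne_zero] at hz
  rw [mul_comm, ZMod.intCast_mul_eq_zero_iff (m := 2) rfl two_ne_zero] at hw
  rw [hz, hw]
  rfl

noncomputable def centerEquiv :
    Subgroup.center (Model k) ≃* Multiplicative (ZMod (2 ^ (k + 1))) × Multiplicative (ZMod 2) :=
  (MulEquiv.subgroupCongr (by rw [center_model, centerParam, zmodProdHom_range])).trans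
    (MonoidHom.ofInjective (centerParam_injective k)).symm

lemma equivModel_of_zero : equivModel k (.of 0) = a := presentationEquiv_of_zero _

lemma equivModel_of_one : equivModel k (.of 1) = b := presentationEquiv_of_one _

lemma commutator_eq : commutator (PresentedGroup (G1rels (k + 4))) =
    Subgroup.zpowers (.of 0 ^ 2 ^ (k + 1)) := by
  refine Subgroup.map_injective (f := (equivModel k).toMonoidHom) (equivModel k).injective ?_
  rw [Subgroup.map_mulEquiv_commutator, MonoidHom.map_zpowers, MulEquiv.coe_toMonoidHom, map_pow,
    equivModel_of_zero, commutator_model]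

lemma card_commutator : Nat.card (commutator (PresentedGroup (G1rels (k + 4)))) = 2 := by
  rw [commutator_eq, Nat.card_zpowers, ← (equivModel k).orderOf_eq, map_pow, equivModel_of_zero,
    orderOf_a_pow]

lemma center_eq : Subgroup.center (PresentedGroup (G1rels (k + 4))) =
    Subgroup.closure {.of 0 ^ 2, .of 1 ^ 2} := by
  refine Subgroup.map_injective (f := (equivModel k).toMonoidHom) (equivModel k).injective ?_
  rw [Subgroup.map_mulEquiv_center, MonoidHom.map_closure, Set.image_pair, MulEquiv.coe_toMonoidHom,
    map_pow, map_pow, equivModel_of_zero, equivModel_of_one, center_model]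

lemma commutator_le_center :
    commutator (PresentedGroup (G1rels (k + 4))) ≤ Subgroup.center _ := by
  rw [commutator_eq, center_eq, Subgroup.zpowers_le, pow_succ' 2 k, pow_mul]
  exact pow_mem (Subgroup.subset_closure (by simp)) _

end G1

/-- For `m ≥ 4`, the group `G₁` has order `2^m`, commutator subgroup
`⟨a^{2^{m-3}}⟩` of order 2, center `⟨a², b²⟩ ≅ C_{2^{m-3}} × C₂`, and
nilpotency class 2. -/
theorem G1_invariants (m : ℕ) (hm : 4 ≤ m) :
    let G := PresentedGroup (G1rels m)
    let a : G := PresentedGroup.of 0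
    let b : G := PresentedGroup.of 1
    Nat.card G = 2 ^ m
    ∧ commutator G = Subgroup.zpowers (a ^ (2 ^ (m - 3)))
    ∧ Nat.card (commutator G) = 2
    ∧ Subgroup.center G = Subgroup.closure {a ^ 2, b ^ 2}
    ∧ Nonempty (Subgroup.center G
        ≃* Multiplicative (ZMod (2 ^ (m - 3))) × Multiplicative (ZMod 2))
    ∧ nilClass G = 2 := by
  obtain ⟨k, rfl⟩ : ∃ k, m = k + 4 := ⟨m - 4, by omega⟩
  have hne : commutator (PresentedGroup (G1rels (k + 4))) ≠ ⊥ := fun h => by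
    simpa [h] using G1.card_commutator k
  exact ⟨(Nat.card_congr (G1.equivModel k).toEquiv).trans (G1.card_model k), G1.commutator_eq k,
    G1.card_commutator k, G1.center_eq k,
    ⟨(Subgroup.centerCongr (G1.equivModel k)).trans (G1.centerEquiv k)⟩,
    nilClass_eq_two hne (G1.commutator_le_center k)⟩
end
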